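/- Consider the arithmetic-mean weights Φ(N,n) = 1/(2N+1) if |n| ≤ N and Φ(N,n) = 0 otherwise. Then: (1) there exists K > 0 such that for every positive integer N and every t ∈ ℝ, |(2N+1)^{−1} ∑_{n=−N}^{N} e^{2πint}| = |sin((2N+1)πt)/((2N+1)sin(πt))| ≤ K(1 + N‖t‖)^{−1}; and (2) for every nonconstant integrable function f on 𝕋^d and every α ∈ ℝ^d, there is no positive integer N such that simultaneously ∫_{𝕋^d} |N^{−1}∑_{n=1}^{N} f(x+nα) − ∫_{𝕋^d} f(y)dy| dx < (2N)^{−1} ∫_{𝕋^d} |f(x) − ∫_{𝕋^d} f(y)dy| dx and ∫_{𝕋^d} |(N+1)^{−1}∑_{n=1}^{N+1} f(x+nα) − ∫_{𝕋^d} f(y)dy| dx < (2(N+1))^{−1} ∫_{𝕋^d} |f(x) − ∫_{𝕋^d} f(y)dy| dx; in particular the speed of convergence of the arithmetic means is never faster than cN^{−1}. -/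

import Mathlib

open MeasureTheory Filter Finset
open scoped Real ENNReal Topology BigOperators

noncomputable section

/-- Distance from a real number to the nearest integer. -/
def dnint (t : ℝ) : ℝ := |t - (round t : ℝ)|

/-- Euclidean norm of an integer vector. -/
def znorm {d : ℕ} (m : Fin d → ℤ) : ℝ := Real.sqrt (∑ i, ((m i : ℝ)) ^ 2)

/-- A function on `ℝ^d` which is `ℤ^d`-periodic (i.e. a function on the torus `𝕋^d`). -/
def ZdPeriodic {d : ℕ} (f : (Fin d → ℝ) → ℂ) : Prop :=
  ∀ (x : Fin d → ℝ) (k : Fin d → ℤ), f (x + fun i => (k i : ℝ)) = f x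

/-- The unit cube, a fundamental domain of the torus `𝕋^d`. -/
def cube (d : ℕ) : Set (Fin d → ℝ) := Set.Icc 0 1

/-- Fourier coefficient of a (periodic) function. -/
def fcoef {d : ℕ} (f : (Fin d → ℝ) → ℂ) (m : Fin d → ℤ) : ℂ :=
  ∫ x in cube d,
    f x * Complex.exp (-(2 * Real.pi * Complex.I * ((∑ i, (m i : ℝ) * x i : ℝ) : ℂ)))

/-- Membership in the Sobolev space `W^{δ,2}(𝕋^d)`. -/
def MemSobolev {d : ℕ} (δ : ℝ) (f : (Fin d → ℝ) → ℂ) : Prop :=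
  Summable (fun m : Fin d → ℤ => (1 + znorm m ^ 2) ^ δ * ‖fcoef f m‖ ^ 2)

/-- The Sobolev norm `‖f‖_{δ,2}`. -/
def sobNorm {d : ℕ} (δ : ℝ) (f : (Fin d → ℝ) → ℂ) : ℝ :=
  Real.sqrt (∑' m : Fin d → ℤ, (1 + znorm m ^ 2) ^ δ * ‖fcoef f m‖ ^ 2)

/-- The kernel `∑_{n ∈ ℤ} Φ(N,n) e^{2πint}` of the summation method. -/
def kern (Φ : ℕ → ℤ → ℂ) (N : ℕ) (t : ℝ) : ℂ :=
  ∑' n : ℤ, Φ N n * Complex.exp (2 * Real.pi * Complex.I * (n : ℂ) * (t : ℂ))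

/-- The weighted discrepancy `D_N^{Φ,α} f(x)`. -/
def disc {d : ℕ} (Φ : ℕ → ℤ → ℂ) (α : Fin d → ℝ) (f : (Fin d → ℝ) → ℂ)
    (N : ℕ) (x : Fin d → ℝ) : ℂ :=
  (∑' n : ℤ, Φ N n * f (x + n • α)) - ∫ y in cube d, f y

/-- `α ∈ ℝ^d` is an irrational vector: `1, α₁, …, α_d` are linearly independent over `ℚ`. -/
def IrrationalVec {d : ℕ} (α : Fin d → ℝ) : Prop :=
  ∀ (m : Fin d → ℤ) (k : ℤ), (∑ i, (m i : ℝ) * α i) + (k : ℝ) = 0 → m = 0 ∧ k = 0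

/-!
For (1), multiplying the Dirichlet sum by `sin πt` telescopes to `sin((2N+1)πt)`; the trivial
bound `1` for `N‖t‖ ≤ 1` and Jordan's inequality `|sin πt| ≥ 2‖t‖` otherwise give `K = 2`.

For (2), put `g = f - ∫ f` and `S_M(x) = ∑_{n=1}^{M} g(x + nα)`, so that the discrepancy of the
`M`-th arithmetic mean is `S_M / M`. Since `g(x + (N+1)α) = S_{N+1}(x) - S_N(x)` and translations
preserve the `L¹(𝕋^d)` norm, `‖g‖₁ ≤ ‖S_N‖₁ + ‖S_{N+1}‖₁`, whereas the two assumed inequalities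
say `‖S_N‖₁ < ‖g‖₁ / 2` and `‖S_{N+1}‖₁ < ‖g‖₁ / 2`.
-/

def dirichletMean (N : ℕ) (t : ℝ) : ℂ :=
  ((2 * (N : ℝ) + 1 : ℝ) : ℂ)⁻¹ *
    ∑ n ∈ Icc (-(N : ℤ)) (N : ℤ), Complex.exp (2 * π * Complex.I * (n : ℂ) * (t : ℂ))

lemma sum_exp_mul_sin (N : ℕ) (t : ℂ) :
    (∑ n ∈ Icc (-(N : ℤ)) (N : ℤ), Complex.exp (2 * π * Complex.I * n * t)) * Complex.sin (π * t)
      = Complex.sin ((2 * N + 1) * π * t) := by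
  induction N with
  | zero => simp
  | succ N ih =>
    have hIcc : Icc (-((N + 1 : ℕ) : ℤ)) ((N + 1 : ℕ) : ℤ)
        = insert (-(N : ℤ) - 1) (insert ((N : ℤ) + 1) (Icc (-(N : ℤ)) N)) := by
      rw [insert_Icc_right_eq_Icc_add_one (by omega), insert_Icc_left_eq_Icc_sub_one (by omega)]
      push_cast; ring_nf
    have hpair : Complex.exp (2 * π * Complex.I * ((-(N : ℤ) - 1 : ℤ) : ℂ) * t)
        + Complex.exp (2 * π * Complex.I * (((N : ℤ) + 1 : ℤ) : ℂ) * t)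
        = 2 * Complex.cos (2 * π * (N + 1) * t) := by
      rw [add_comm, Complex.two_cos]; push_cast; ring_nf
    rw [hIcc, sum_insert (by simp; omega), sum_insert (by simp), ← add_assoc, add_mul, hpair, ih]
    rw [show (2 * (N : ℂ) + 1) * π * t = 2 * π * (N + 1) * t - π * t by ring,
      show (2 * ((N + 1 : ℕ) : ℂ) + 1) * π * t = 2 * π * (N + 1) * t + π * t by push_cast; ring,
      Complex.sin_add, Complex.sin_sub]
    ring

lemma norm_dirichletMean {N : ℕ} {t : ℝ} (h : Real.sin (π * t) ≠ 0) :
    ‖dirichletMean N t‖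
      = |Real.sin ((2 * N + 1) * π * t)| / ((2 * N + 1) * |Real.sin (π * t)|) := by
  have hsum := sum_exp_mul_sin N t
  rw [show ((2 * N + 1) * π * t : ℂ) = ((2 * N + 1) * π * t : ℝ) by push_cast; ring,
    show (π * t : ℂ) = (π * t : ℝ) by push_cast; ring, ← Complex.ofReal_sin, ← Complex.ofReal_sin,
    ← eq_div_iff (by exact_mod_cast h)] at hsum
  have h2N : (0 : ℝ) < 2 * N + 1 := by positivity
  rw [dirichletMean, hsum, norm_mul, norm_div, norm_inv, Complex.norm_real, Complex.norm_real,
    Complex.norm_real, Real.norm_of_nonneg h2N.le, Real.norm_eq_abs, Real.norm_eq_abs,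
    div_mul_eq_div_div, inv_mul_eq_div, div_right_comm]

lemma norm_dirichletMean_le_one (N : ℕ) (t : ℝ) : ‖dirichletMean N t‖ ≤ 1 := by
  have h2N : (0 : ℝ) < 2 * N + 1 := by positivity
  rw [dirichletMean, norm_mul, norm_inv, Complex.norm_real, Real.norm_of_nonneg h2N.le,
    inv_mul_le_iff₀ h2N, mul_one]
  calc _ ≤ ∑ n ∈ Icc (-(N : ℤ)) (N : ℤ), ‖Complex.exp (2 * π * Complex.I * n * t)‖ :=
        norm_sum_le _ _
    _ = 2 * N + 1 := by
        have hcard : #(Icc (-(N : ℤ)) N) = 2 * N + 1 := by simp; omega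
        simp [Complex.norm_exp, hcard]

lemma two_mul_dnint_le_abs_sin (t : ℝ) : 2 * dnint t ≤ |Real.sin (π * t)| := by
  have hu : |t - round t| ≤ 1 / 2 := abs_sub_round t
  have hshift : Real.sin (π * (t - round t)) = (-1) ^ round t * Real.sin (π * t) := by
    rw [mul_sub, mul_comm π (round t : ℝ), Real.sin_sub_int_mul_pi]
  have hsin : |Real.sin (π * t)| = Real.sin (π * |t - round t|) := by
    have hπu : |π * (t - round t)| = π * |t - round t| := by
      rw [abs_mul, abs_of_pos Real.pi_pos]
    rw [← hπu, ← Real.abs_sin_eq_sin_abs_of_abs_le_pi (by rw [hπu]; nlinarith [Real.pi_pos]),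
      hshift, abs_mul, abs_neg_one_zpow, one_mul]
  rw [hsin, dnint]
  calc 2 * |t - round t| = 2 / π * (π * |t - round t|) := by field_simp
    _ ≤ _ := Real.mul_le_sin (by positivity) (by nlinarith [Real.pi_pos])

lemma norm_dirichletMean_le (N : ℕ) (t : ℝ) :
    ‖dirichletMean N t‖ ≤ 2 * (1 + N * dnint t)⁻¹ := by
  have hd : 0 ≤ dnint t := abs_nonneg _
  have hpos : 0 < 1 + N * dnint t := by positivity
  rw [← div_eq_mul_inv, le_div_iff₀ hpos]
  by_cases hsmall : N * dnint t ≤ 1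
  · nlinarith [norm_dirichletMean_le_one N t, norm_nonneg (dirichletMean N t)]
  have hsin := two_mul_dnint_le_abs_sin t
  have hd₀ : 0 < dnint t := by
    by_contra! h; rw [le_antisymm h hd, mul_zero] at hsmall; linarith
  have hsin₀ : 0 < |Real.sin (π * t)| := by linarith
  rw [norm_dirichletMean (abs_pos.mp hsin₀), div_mul_eq_mul_div,
    div_le_iff₀ (mul_pos (by positivity) hsin₀)]
  nlinarith [Real.abs_sin_le_one ((2 * N + 1) * π * t)]

-- An `AddSubgroup` rather than a submodule, so that the measurable-action instances apply;
-- only `Countable` has to be transferred by hand.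
abbrev intLattice (d : ℕ) : AddSubgroup (Fin d → ℝ) :=
  (Submodule.span ℤ (Set.range (Pi.basisFun ℝ (Fin d)))).toAddSubgroup

instance (d : ℕ) : Countable (intLattice d) :=
  inferInstanceAs (Countable (Submodule.span ℤ (Set.range (Pi.basisFun ℝ (Fin d)))))

section Torus

variable {d : ℕ} {E : Type*} [NormedAddCommGroup E]

lemma ZdPeriodic.vadd_eq {f : (Fin d → ℝ) → ℂ} (hf : ZdPeriodic f) (γ : intLattice d)
    (x : Fin d → ℝ) : f (γ +ᵥ x) = f x := by
  have hk i := ((Pi.basisFun ℝ (Fin d)).mem_span_iff_repr_mem ℤ _).mp γ.2 i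
  choose k hk using hk
  have hγ : (γ : Fin d → ℝ) = fun i => (k i : ℝ) :=
    funext fun i => by simpa [Pi.basisFun_repr] using (hk i).symm
  rw [AddSubgroup.vadd_def, vadd_eq_add, add_comm, hγ, hf]

lemma restrict_fundamentalDomain_pi_basisFun (d : ℕ) :
    volume.restrict (ZSpan.fundamentalDomain (Pi.basisFun ℝ (Fin d)))
      = volume.restrict (cube d) := by
  refine Measure.restrict_congr_set ?_
  rw [ZSpan.fundamentalDomain_pi_basisFun, cube]
  exact Measure.univ_pi_Ico_ae_eq_Icc

lemma isAddFundamentalDomain_preimage_add_right (v : Fin d → ℝ) :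
    IsAddFundamentalDomain (intLattice d)
      ((· + v) ⁻¹' ZSpan.fundamentalDomain (Pi.basisFun ℝ (Fin d))) volume :=
  (ZSpan.isAddFundamentalDomain' _ volume).preimage_of_equiv
    (measurePreserving_add_right volume v).quasiMeasurePreserving (e := id)
    Function.bijective_id fun γ x => vadd_add_assoc (γ : Fin d → ℝ) x v

variable {f : (Fin d → ℝ) → E} (hf : ∀ (γ : intLattice d) x, f (γ +ᵥ x) = f x)
include hf

lemma integrableOn_cube_comp_add_right (hi : IntegrableOn f (cube d)) (v : Fin d → ℝ) :
    IntegrableOn (fun x => f (x + v)) (cube d) := by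
  unfold IntegrableOn at hi ⊢
  rw [← restrict_fundamentalDomain_pi_basisFun] at hi ⊢
  refine ((ZSpan.isAddFundamentalDomain' _ volume).integrableOn_iff
    (isAddFundamentalDomain_preimage_add_right v)
    (f := fun x => f (x + v)) fun γ x => by rw [vadd_add_assoc, hf]).mpr ?_
  exact ((measurePreserving_add_right volume v).integrableOn_comp_preimage
    (MeasurableEquiv.addRight v).measurableEmbedding).mpr hi

variable [NormedSpace ℝ E]

lemma setIntegral_cube_comp_add_right (v : Fin d → ℝ) :
    ∫ x in cube d, f (x + v) = ∫ x in cube d, f x := by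
  rw [← restrict_fundamentalDomain_pi_basisFun]
  calc ∫ x in ZSpan.fundamentalDomain (Pi.basisFun ℝ (Fin d)), f (x + v)
      = ∫ x in (· + v) ⁻¹' ZSpan.fundamentalDomain (Pi.basisFun ℝ (Fin d)), f (x + v) :=
        (ZSpan.isAddFundamentalDomain' _ volume).setIntegral_eq
          (isAddFundamentalDomain_preimage_add_right v)
          fun γ x => by rw [vadd_add_assoc, hf]
    _ = ∫ x in ZSpan.fundamentalDomain (Pi.basisFun ℝ (Fin d)), f x :=
        (measurePreserving_add_right volume v).setIntegral_preimage_emb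
          (MeasurableEquiv.addRight v).measurableEmbedding _ _

end Torus

lemma natCast_card_mul_norm_inv_mul_sum_sub {𝕜 ι : Type*} [RCLike 𝕜] (s : Finset ι)
    (a : ι → 𝕜) (c : 𝕜) :
    (#s : ℝ) * ‖(#s : 𝕜)⁻¹ * ∑ i ∈ s, a i - c‖ = ‖∑ i ∈ s, (a i - c)‖ := by
  rcases s.eq_empty_or_nonempty with rfl | hs
  · simp
  have hcard : (#s : 𝕜) ≠ 0 := Nat.cast_ne_zero.mpr hs.card_ne_zero
  rw [sum_sub_distrib, sum_const, nsmul_eq_mul, ← RCLike.norm_natCast (K := 𝕜), ← norm_mul,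
    mul_sub, mul_inv_cancel_left₀ hcard]

section ShiftSums

variable {d : ℕ} {E : Type*} [NormedAddCommGroup E]

lemma natCast_mul_integral_norm_mean_sub (f : (Fin d → ℝ) → ℂ) (α : Fin d → ℝ) (c : ℂ)
    (M : ℕ) :
    (M : ℝ) * ∫ x in cube d, ‖(M : ℂ)⁻¹ * ∑ n ∈ Icc (1 : ℤ) M, f (x + n • α) - c‖
      = ∫ x in cube d, ‖∑ n ∈ Icc (1 : ℤ) M, (f (x + n • α) - c)‖ := by
  have hcard : #(Icc (1 : ℤ) M) = M := by simp
  rw [← integral_const_mul]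
  congr 1 with x
  simpa only [hcard] using
    natCast_card_mul_norm_inv_mul_sum_sub (Icc (1 : ℤ) M) (fun n : ℤ => f (x + n • α)) c

lemma integral_norm_le_integral_norm_sum_add {g : (Fin d → ℝ) → E}
    (hg : ∀ (γ : intLattice d) x, g (γ +ᵥ x) = g x) (hi : IntegrableOn g (cube d))
    (α : Fin d → ℝ) (N : ℕ) :
    ∫ x in cube d, ‖g x‖ ≤ (∫ x in cube d, ‖∑ n ∈ Icc (1 : ℤ) N, g (x + n • α)‖)
      + ∫ x in cube d, ‖∑ n ∈ Icc (1 : ℤ) (N + 1), g (x + n • α)‖ := by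
  have hsum (M : ℤ) : IntegrableOn (fun x => ∑ n ∈ Icc (1 : ℤ) M, g (x + n • α)) (cube d) :=
    integrable_finsetSum _ fun n _ => integrableOn_cube_comp_add_right hg hi (n • α)
  have hsucc (x : Fin d → ℝ) : g (x + ((N : ℤ) + 1) • α)
      = ∑ n ∈ Icc (1 : ℤ) (N + 1), g (x + n • α) - ∑ n ∈ Icc (1 : ℤ) N, g (x + n • α) := by
    rw [← insert_Icc_right_eq_Icc_add_one (by omega), sum_insert (by simp), add_sub_cancel_right]
  calc ∫ x in cube d, ‖g x‖ = ∫ x in cube d, ‖g (x + ((N : ℤ) + 1) • α)‖ :=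
        (setIntegral_cube_comp_add_right (f := fun x => ‖g x‖) (by simp [hg]) _).symm
    _ ≤ ∫ x in cube d, (‖∑ n ∈ Icc (1 : ℤ) N, g (x + n • α)‖
          + ‖∑ n ∈ Icc (1 : ℤ) (N + 1), g (x + n • α)‖) := by
        refine integral_mono_of_nonneg (ae_of_all _ fun _ => norm_nonneg _)
          ((hsum N).norm.add (hsum (N + 1)).norm) (ae_of_all _ fun x => ?_)
        simpa only [hsucc, add_comm (‖∑ n ∈ Icc (1 : ℤ) N, _‖)] using norm_sub_le _ _
    _ = _ := integral_add (hsum N).norm (hsum (N + 1)).norm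

end ShiftSums

lemma integral_norm_sub_integral_le {d : ℕ} {f : (Fin d → ℝ) → ℂ} (hf : ZdPeriodic f)
    (hi : IntegrableOn f (cube d)) (α : Fin d → ℝ) (N : ℕ) :
    ∫ x in cube d, ‖f x - ∫ y in cube d, f y‖ ≤
      (N : ℝ) * (∫ x in cube d,
          ‖(N : ℂ)⁻¹ * (∑ n ∈ Icc (1 : ℤ) (N : ℤ), f (x + n • α)) - ∫ y in cube d, f y‖)
      + ((N : ℝ) + 1) * ∫ x in cube d, ‖((N : ℂ) + 1)⁻¹ *
          (∑ n ∈ Icc (1 : ℤ) ((N : ℤ) + 1), f (x + n • α)) - ∫ y in cube d, f y‖ := by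
  have hsucc := natCast_mul_integral_norm_mean_sub f α (∫ y in cube d, f y) (N + 1)
  push_cast at hsucc
  rw [natCast_mul_integral_norm_mean_sub, hsucc]
  exact integral_norm_le_integral_norm_sum_add (g := fun x => f x - ∫ y in cube d, f y)
    (fun γ x => by rw [hf.vadd_eq])
    (hi.sub (integrableOn_const isCompact_Icc.measure_lt_top.ne)) α N

theorem stmt_7_general (d : ℕ) :
    (∃ K : ℝ, 0 < K ∧ ∀ N : ℕ, 1 ≤ N → ∀ t : ℝ,
      (Real.sin (Real.pi * t) ≠ 0 →
        ‖((2 * (N : ℝ) + 1 : ℝ) : ℂ)⁻¹ *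
            ∑ n ∈ Finset.Icc (-(N : ℤ)) (N : ℤ),
              Complex.exp (2 * Real.pi * Complex.I * (n : ℂ) * (t : ℂ))‖
          = |Real.sin ((2 * (N : ℝ) + 1) * Real.pi * t)| /
              ((2 * (N : ℝ) + 1) * |Real.sin (Real.pi * t)|)) ∧
      ‖((2 * (N : ℝ) + 1 : ℝ) : ℂ)⁻¹ *
          ∑ n ∈ Finset.Icc (-(N : ℤ)) (N : ℤ),
            Complex.exp (2 * Real.pi * Complex.I * (n : ℂ) * (t : ℂ))‖
        ≤ K * (1 + (N : ℝ) * dnint t) ^ (-(1 : ℝ)))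
    ∧
    (∀ f : (Fin d → ℝ) → ℂ, ZdPeriodic f → IntegrableOn f (cube d) volume →
      (¬ ∃ c : ℂ, ∀ x : Fin d → ℝ, f x = c) → ∀ α : Fin d → ℝ,
      ¬ ∃ N : ℕ, 1 ≤ N ∧
        (∫ x in cube d, ‖(N : ℂ)⁻¹ * (∑ n ∈ Finset.Icc (1 : ℤ) (N : ℤ), f (x + n • α))
              - ∫ y in cube d, f y‖)
          < (2 * (N : ℝ))⁻¹ * ∫ x in cube d, ‖f x - ∫ y in cube d, f y‖ ∧
        (∫ x in cube d, ‖((N : ℂ) + 1)⁻¹ *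
              (∑ n ∈ Finset.Icc (1 : ℤ) ((N : ℤ) + 1), f (x + n • α))
              - ∫ y in cube d, f y‖)
          < (2 * ((N : ℝ) + 1))⁻¹ * ∫ x in cube d, ‖f x - ∫ y in cube d, f y‖) := by
  refine ⟨⟨2, two_pos, fun N _ t => ⟨norm_dirichletMean, ?_⟩⟩, ?_⟩
  · rw [Real.rpow_neg_one]
    exact norm_dirichletMean_le N t
  · rintro f hf hi - α ⟨N, hN, hlt, hlt_succ⟩
    have hle := integral_norm_sub_integral_le hf hi α N
    have hhalf (a : ℝ) (ha : 0 < a) : a * (2 * a)⁻¹ = 1 / 2 := by field_simp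
    have h := mul_lt_mul_of_pos_left hlt (by exact_mod_cast hN : (0 : ℝ) < N)
    have h_succ := mul_lt_mul_of_pos_left hlt_succ (by positivity : (0 : ℝ) < N + 1)
    rw [← mul_assoc, hhalf _ (by exact_mod_cast hN)] at h
    rw [← mul_assoc, hhalf _ (by positivity)] at h_succ
    linarith

/-- Corollary 1.8: arithmetic means. (1) The Dirichlet-kernel bound
`|(2N+1)^{-1} ∑_{|n|≤N} e^{2πint}| ≤ K(1+N‖t‖)^{-1}` together with the sine identity;
(2) the speed of convergence of arithmetic means is never faster than `cN^{-1}`. -/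
theorem stmt_7 (d : ℕ) (hd : 0 < d) :
    (∃ K : ℝ, 0 < K ∧ ∀ N : ℕ, 1 ≤ N → ∀ t : ℝ,
      (Real.sin (Real.pi * t) ≠ 0 →
        ‖((2 * (N : ℝ) + 1 : ℝ) : ℂ)⁻¹ *
            ∑ n ∈ Finset.Icc (-(N : ℤ)) (N : ℤ),
              Complex.exp (2 * Real.pi * Complex.I * (n : ℂ) * (t : ℂ))‖
          = |Real.sin ((2 * (N : ℝ) + 1) * Real.pi * t)| /
              ((2 * (N : ℝ) + 1) * |Real.sin (Real.pi * t)|)) ∧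
      ‖((2 * (N : ℝ) + 1 : ℝ) : ℂ)⁻¹ *
          ∑ n ∈ Finset.Icc (-(N : ℤ)) (N : ℤ),
            Complex.exp (2 * Real.pi * Complex.I * (n : ℂ) * (t : ℂ))‖
        ≤ K * (1 + (N : ℝ) * dnint t) ^ (-(1 : ℝ)))
    ∧
    (∀ f : (Fin d → ℝ) → ℂ, ZdPeriodic f → IntegrableOn f (cube d) volume →
      (¬ ∃ c : ℂ, ∀ x : Fin d → ℝ, f x = c) → ∀ α : Fin d → ℝ,
      ¬ ∃ N : ℕ, 1 ≤ N ∧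
        (∫ x in cube d, ‖(N : ℂ)⁻¹ * (∑ n ∈ Finset.Icc (1 : ℤ) (N : ℤ), f (x + n • α))
              - ∫ y in cube d, f y‖)
          < (2 * (N : ℝ))⁻¹ * ∫ x in cube d, ‖f x - ∫ y in cube d, f y‖ ∧
        (∫ x in cube d, ‖((N : ℂ) + 1)⁻¹ *
              (∑ n ∈ Finset.Icc (1 : ℤ) ((N : ℤ) + 1), f (x + n • α))
              - ∫ y in cube d, f y‖)
          < (2 * ((N : ℝ) + 1))⁻¹ * ∫ x in cube d, ‖f x - ∫ y in cube d, f y‖) :=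
  stmt_7_general d
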